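/- arXiv:2604.02735 — 5 statements merged into one kernel-verified Lean document; each statement's English description precedes it below -/
import Mathlib

section
/- Let p and q be probability densities on ℝ with p, q ∈ L¹(ℝ) ∩ L²(ℝ), and let h ∈ L²(ℝ) be such that h·p and h·q are integrable. Set ĥ = ∫_ℝ h(y) p(y) dy, ĥ_q = ∫_ℝ h(y) q(y) dy, f(x) = −∫_{−∞}^x (h(y) − ĥ) p(y) dy and f_q(x) = −∫_{−∞}^x (h(y) − ĥ_q) q(y) dy. Then for every x ∈ ℝ, |f(x) − f_q(x)| ≤ 2‖h‖_{L²(ℝ)} ‖p − q‖_{L²(ℝ)} + |ĥ_q| · ‖p − q‖_{L¹(ℝ)}. -/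
/-!
With `ĥ_p = ∫ h p` and `ĥ_q = ∫ h q`, the integrand of the difference splits as
`(h - ĥ_p) p - (h - ĥ_q) q = h (p - q) - (ĥ_p - ĥ_q) p - ĥ_q (p - q)`.
Over `(-∞, x]`, the first term is at most `‖h‖₂ ‖p - q‖₂` by Cauchy–Schwarz; so is the second,
because `ĥ_p - ĥ_q = ∫ h (p - q)` and `p` has mass at most one on `(-∞, x]`; the third is at most
`|ĥ_q| ‖p - q‖₁`.
-/

open MeasureTheory

section

variable {α : Type*} [MeasurableSpace α] {μ : Measure α}

theorem integral_abs_mul_le_sqrt_mul_sqrt {f g : α → ℝ} (hf : MemLp f 2 μ) (hg : MemLp g 2 μ) :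
    ∫ a, |f a * g a| ∂μ ≤ √(∫ a, f a ^ 2 ∂μ) * √(∫ a, g a ^ 2 ∂μ) := by
  have holder := integral_mul_norm_le_Lp_mul_Lq (μ := μ) Real.HolderConjugate.two_two
    (by simpa using hf) (by simpa using hg)
  simpa [abs_mul, Real.sqrt_eq_rpow] using holder

theorem abs_setIntegral_le_integral_abs {f : α → ℝ} (hf : Integrable f μ) (s : Set α) :
    |∫ a in s, f a ∂μ| ≤ ∫ a, |f a| ∂μ :=
  abs_integral_le_integral_abs.trans
    (setIntegral_le_integral hf.abs (ae_of_all _ fun _ => abs_nonneg _))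

theorem abs_setIntegral_le_one_of_integral_eq_one {p : α → ℝ} (hp_nonneg : ∀ a, 0 ≤ p a)
    (hp_int : Integrable p μ) (hp_one : ∫ a, p a ∂μ = 1) (s : Set α) :
    |∫ a in s, p a ∂μ| ≤ 1 := by
  rw [abs_of_nonneg (integral_nonneg hp_nonneg), ← hp_one]
  exact setIntegral_le_integral hp_int (ae_of_all _ hp_nonneg)

theorem setIntegral_centered_mul_sub_setIntegral_centered_mul {h p q : α → ℝ}
    (hp : Integrable p μ) (hq : Integrable q μ)
    (hhp : Integrable (fun y => h y * p y) μ) (hhq : Integrable (fun y => h y * q y) μ)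
    (a b : ℝ) (s : Set α) :
    ∫ y in s, (h y - a) * p y ∂μ - ∫ y in s, (h y - b) * q y ∂μ =
      ∫ y in s, h y * (p y - q y) ∂μ - (a - b) * ∫ y in s, p y ∂μ
        - b * ∫ y in s, (p y - q y) ∂μ := by
  simp only [sub_mul, mul_sub]
  rw [integral_sub hhp.restrict (hp.const_mul a).restrict,
    integral_sub hhq.restrict (hq.const_mul b).restrict,
    integral_sub hhp.restrict hhq.restrict, integral_sub hp.restrict hq.restrict,
    integral_const_mul, integral_const_mul]
  ring

end

theorem gain_antiderivative_stability_general
    (p q h : ℝ → ℝ)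
    (hp_nonneg : ∀ x, 0 ≤ p x)
    (hp_int : Integrable p) (hp_one : (∫ x : ℝ, p x) = 1)
    (hp_L2 : MemLp p 2 (volume : Measure ℝ))
    (hq_int : Integrable q)
    (hq_L2 : MemLp q 2 (volume : Measure ℝ))
    (hh : MemLp h 2 (volume : Measure ℝ))
    (hhp : Integrable (fun x => h x * p x))
    (hhq : Integrable (fun x => h x * q x)) :
    ∀ x : ℝ,
      |(-∫ y in Set.Iic x, (h y - ∫ z : ℝ, h z * p z) * p y) -
          (-∫ y in Set.Iic x, (h y - ∫ z : ℝ, h z * q z) * q y)| ≤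
        2 * Real.sqrt (∫ y : ℝ, h y ^ 2) * Real.sqrt (∫ y : ℝ, (p y - q y) ^ 2) +
          |∫ z : ℝ, h z * q z| * ∫ y : ℝ, |p y - q y| := by
  intro x
  set S := √(∫ y, h y ^ 2) * √(∫ y, (p y - q y) ^ 2)
  have hhpq : Integrable (fun y => h y * (p y - q y)) := by simp_rw [mul_sub]; exact hhp.sub hhq
  have cauchy_schwarz : ∫ y, |h y * (p y - q y)| ≤ S :=
    integral_abs_mul_le_sqrt_mul_sqrt hh (hp_L2.sub hq_L2)
  have mean_diff : |(∫ z, h z * p z) - ∫ z, h z * q z| ≤ S := by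
    rw [← integral_sub hhp hhq]
    simpa [mul_sub] using abs_integral_le_integral_abs.trans cauchy_schwarz
  rw [neg_sub_neg, abs_sub_comm, setIntegral_centered_mul_sub_setIntegral_centered_mul hp_int
    hq_int hhp hhq]
  calc _ ≤ S + S * 1 + |∫ z, h z * q z| * ∫ y, |p y - q y| := by
        refine (abs_sub _ _).trans (add_le_add ((abs_sub _ _).trans (add_le_add ?_ ?_)) ?_)
        · exact (abs_setIntegral_le_integral_abs hhpq _).trans cauchy_schwarz
        · rw [abs_mul]
          exact mul_le_mul mean_diff
            (abs_setIntegral_le_one_of_integral_eq_one hp_nonneg hp_int hp_one _)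
            (abs_nonneg _) (cauchy_schwarz.trans' (integral_nonneg fun _ => abs_nonneg _))
        · rw [abs_mul]
          exact mul_le_mul_of_nonneg_left
            (abs_setIntegral_le_integral_abs (hp_int.sub hq_int) _) (abs_nonneg _)
    _ = _ := by ring

/-- stability of the gain-function antiderivative
f(x) = -∫_{-∞}^x (h - ĥ) p under perturbation of the density p. -/
theorem gain_antiderivative_stability
    (p q h : ℝ → ℝ)
    (hp_meas : Measurable p) (hp_nonneg : ∀ x, 0 ≤ p x)
    (hp_int : Integrable p) (hp_one : (∫ x : ℝ, p x) = 1)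
    (hp_L2 : MemLp p 2 (volume : Measure ℝ))
    (hq_meas : Measurable q) (hq_nonneg : ∀ x, 0 ≤ q x)
    (hq_int : Integrable q) (hq_one : (∫ x : ℝ, q x) = 1)
    (hq_L2 : MemLp q 2 (volume : Measure ℝ))
    (hh : MemLp h 2 (volume : Measure ℝ))
    (hhp : Integrable (fun x => h x * p x))
    (hhq : Integrable (fun x => h x * q x)) :
    ∀ x : ℝ,
      |(-∫ y in Set.Iic x, (h y - ∫ z : ℝ, h z * p z) * p y) -
          (-∫ y in Set.Iic x, (h y - ∫ z : ℝ, h z * q z) * q y)| ≤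
        2 * Real.sqrt (∫ y : ℝ, h y ^ 2) * Real.sqrt (∫ y : ℝ, (p y - q y) ^ 2) +
          |∫ z : ℝ, h z * q z| * ∫ y : ℝ, |p y - q y| :=
  gain_antiderivative_stability_general p q h hp_nonneg hp_int hp_one hp_L2 hq_int hq_L2 hh hhp hhq
end

section
/- Let s ≥ 2. There exists a constant C > 0 such that for every integer M ≥ 2 and every f ∈ L²(ℝ) with ‖f‖_s < ∞ admitting Galerkin coefficients a_0, …, a_M of order M, one has Σ_{m=0}^M |a_m − f̂_m|² ≤ C · M^{−s+1} · (log M) · ‖f‖_s². -/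
open MeasureTheory Real

/-- Physicists' Hermite polynomials: H_0 = 1, H_1 = 2x, H_{n+1} = 2x H_n - 2n H_{n-1}. -/
noncomputable def physHermite : ℕ → ℝ → ℝ
  | 0 => fun _ => 1
  | 1 => fun x => 2 * x
  | n + 2 => fun x => 2 * x * physHermite (n + 1) x - 2 * (n + 1) * physHermite n x

/-- Generalized Hermite functions H̃_n(x) = π^{-1/4} (2^n n!)^{-1/2} e^{-x²/2} H_n(x). -/
noncomputable def tildeH (n : ℕ) (x : ℝ) : ℝ :=
  Real.pi ^ (-(1 / 4) : ℝ) * (Real.sqrt (2 ^ n * n.factorial))⁻¹ *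
    Real.exp (-x ^ 2 / 2) * physHermite n x

/-- Hermite coefficients f̂_m = ∫ f H̃_m. -/
noncomputable def hermCoeff (f : ℝ → ℝ) (m : ℕ) : ℝ := ∫ x : ℝ, f x * tildeH m x

/-- b_l = √((l+1)/2) f̂_{l+1} - √(l/2) f̂_{l-1} (with the convention f̂_{-1} = 0;
here `l - 1` is truncated ℕ-subtraction, harmless since √(0/2) = 0 when l = 0). -/
noncomputable def bCoeff (f : ℝ → ℝ) (l : ℕ) : ℝ :=
  Real.sqrt (((l : ℝ) + 1) / 2) * hermCoeff f (l + 1) -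
    Real.sqrt ((l : ℝ) / 2) * hermCoeff f (l - 1)

/-- `a 0, …, a M` are Galerkin coefficients of order `M` for `f`
(with the convention a_{-1} = 0, again harmless by ℕ-subtraction since √(0/2) = 0). -/
def IsGalerkinCoeffs (f : ℝ → ℝ) (M : ℕ) (a : ℕ → ℝ) : Prop :=
  (∀ l : ℕ, l + 1 ≤ M →
      bCoeff f l = Real.sqrt (((l : ℝ) + 1) / 2) * a (l + 1) -
        Real.sqrt ((l : ℝ) / 2) * a (l - 1)) ∧
  bCoeff f M = -Real.sqrt ((M : ℝ) / 2) * a (M - 1) ∧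
  bCoeff f (M + 1) = -Real.sqrt (((M : ℝ) + 1) / 2) * a M

/-- Hermite–Sobolev squared norm ‖f‖_s² = Σ (m+1)^s |f̂_m|². -/
noncomputable def sobolevSq (f : ℝ → ℝ) (s : ℝ) : ℝ :=
  ∑' m : ℕ, ((m : ℝ) + 1) ^ s * hermCoeff f m ^ 2

/-! The errors `e_m = a_m - f̂_m` satisfy the homogeneous recurrence
`√((l+1)/2) e_{l+1} = √(l/2) e_{l-1}` for `l < M`, so `(m+1) e_m²` can only grow in steps of two
up to `m ∈ {M-1, M}`, where the two boundary equations pin it to `(M+1) f̂_{M+1}²` and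
`(M+2) f̂_{M+2}²`. Both are at most `M^{1-s} ‖f‖_s²`, and summing `e_m² ≤ K / (m+1)` costs the
harmonic factor `log M`. -/

theorem sq_le_rpow_neg_mul_tsum {s : ℝ} {c : ℕ → ℝ}
    (hc : Summable fun m : ℕ => ((m : ℝ) + 1) ^ s * c m ^ 2) (m : ℕ) :
    c m ^ 2 ≤ ((m : ℝ) + 1) ^ (-s) * ∑' n : ℕ, ((n : ℝ) + 1) ^ s * c n ^ 2 := by
  have hpos : 0 < ((m : ℝ) + 1) ^ s := by positivity
  rw [rpow_neg (by positivity), inv_mul_eq_div, le_div_iff₀ hpos, mul_comm]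
  exact hc.le_tsum m fun _ _ => by positivity

theorem natCast_mul_sq_le_rpow_mul_tsum {s x : ℝ} {c : ℕ → ℝ} (hs : 1 ≤ s) (hx : 0 < x)
    (hc : Summable fun m : ℕ => ((m : ℝ) + 1) ^ s * c m ^ 2) {n : ℕ} (hn : x ≤ n + 1) :
    n * c n ^ 2 ≤ x ^ (-s + 1) * ∑' m : ℕ, ((m : ℝ) + 1) ^ s * c m ^ 2 := by
  have hweight : (n : ℝ) * ((n : ℝ) + 1) ^ (-s) ≤ x ^ (-s + 1) :=
    calc (n : ℝ) * ((n : ℝ) + 1) ^ (-s)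
        ≤ ((n : ℝ) + 1) * ((n : ℝ) + 1) ^ (-s) := by gcongr; linarith
      _ = ((n : ℝ) + 1) ^ (-s + 1) := by rw [rpow_add_one (by positivity), mul_comm]
      _ ≤ x ^ (-s + 1) := rpow_le_rpow_of_nonpos hx hn (by linarith)
  calc (n : ℝ) * c n ^ 2
      ≤ n * (((n : ℝ) + 1) ^ (-s) * ∑' m : ℕ, ((m : ℝ) + 1) ^ s * c m ^ 2) := by
        gcongr; exact sq_le_rpow_neg_mul_tsum hc n
    _ ≤ x ^ (-s + 1) * ∑' m : ℕ, ((m : ℝ) + 1) ^ s * c m ^ 2 := by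
        rw [← mul_assoc]; gcongr

theorem one_add_log_succ_le_four_mul_log {x : ℝ} (hx : 2 ≤ x) : 1 + log (x + 1) ≤ 4 * log x := by
  have hlog2 : 1 / 2 < log 2 := by linarith [log_two_gt_d9]
  have hlog : log 2 ≤ log x := log_le_log two_pos hx
  have hsucc : log (x + 1) ≤ 2 * log x := by
    calc log (x + 1) ≤ log (x ^ 2) := log_le_log (by positivity) (by nlinarith)
      _ = 2 * log x := by rw [log_pow]; norm_num
  linarith

theorem sum_range_inv_succ_le_one_add_log (n : ℕ) :
    ∑ m ∈ Finset.range n, ((m : ℝ) + 1)⁻¹ ≤ 1 + log n := by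
  simpa [harmonic] using harmonic_le_one_add_log n

theorem forall_le_of_le_add_two {w : ℕ → ℝ} {M : ℕ} {K : ℝ}
    (hstep : ∀ m, m + 2 ≤ M → w m ≤ w (m + 2)) (hM : w M ≤ K) (hM' : w (M - 1) ≤ K) :
    ∀ m ≤ M, w m ≤ K := by
  suffices ∀ k m, m + k = M → w m ≤ K from fun m hm => this (M - m) m (by omega)
  intro k
  induction k using Nat.twoStepInduction with
  | zero => intro m hm; simpa [← hm] using hM
  | one => intro m hm; simpa [← hm] using hM'
  | more k ih _ => intro m hm; exact (hstep m (by omega)).trans (ih (m + 2) (by omega))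

theorem mul_sq_eq_of_sqrt_mul_eq {A B X Y : ℝ} (hA : 0 ≤ A) (hB : 0 ≤ B)
    (h : √A * X = √B * Y) : A * X ^ 2 = B * Y ^ 2 := by
  have h2 : (√A * X) ^ 2 = (√B * Y) ^ 2 := by rw [h]
  rwa [mul_pow, mul_pow, sq_sqrt hA, sq_sqrt hB] at h2

namespace IsGalerkinCoeffs

variable {f : ℝ → ℝ} {M : ℕ} {a : ℕ → ℝ}

theorem sqrt_mul_error_eq (h : IsGalerkinCoeffs f M a) {l : ℕ} (hl : l + 1 ≤ M) :
    √(((l : ℝ) + 1) / 2) * (a (l + 1) - hermCoeff f (l + 1)) =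
      √((l : ℝ) / 2) * (a (l - 1) - hermCoeff f (l - 1)) := by
  have hb := h.1 l hl
  rw [bCoeff] at hb
  linarith

theorem weighted_error_sq_le_add_two (h : IsGalerkinCoeffs f M a) {m : ℕ} (hm : m + 2 ≤ M) :
    ((m : ℝ) + 1) * (a m - hermCoeff f m) ^ 2 ≤
      ((m + 2 : ℕ) + 1 : ℝ) * (a (m + 2) - hermCoeff f (m + 2)) ^ 2 := by
  have hsq := mul_sq_eq_of_sqrt_mul_eq (by positivity) (by positivity)
    (h.sqrt_mul_error_eq (l := m + 1) hm)
  simp only [Nat.add_sub_cancel, Nat.cast_add, Nat.cast_one, Nat.cast_ofNat] at hsq ⊢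
  nlinarith [sq_nonneg (a (m + 2) - hermCoeff f (m + 2))]

theorem weighted_error_sq_pred (h : IsGalerkinCoeffs f M a) (hM : 1 ≤ M) :
    (((M - 1 : ℕ) : ℝ) + 1) * (a (M - 1) - hermCoeff f (M - 1)) ^ 2 =
      ((M + 1 : ℕ) : ℝ) * hermCoeff f (M + 1) ^ 2 := by
  have hb := h.2.1
  rw [bCoeff] at hb
  have hsqrt : √((M : ℝ) / 2) * (a (M - 1) - hermCoeff f (M - 1)) =
      √(((M : ℝ) + 1) / 2) * -hermCoeff f (M + 1) := by linarith
  have hsq := mul_sq_eq_of_sqrt_mul_eq (by positivity) (by positivity) hsqrt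
  rw [Nat.cast_sub hM]
  push_cast at hsq ⊢
  linarith

theorem weighted_error_sq_last (h : IsGalerkinCoeffs f M a) :
    ((M : ℝ) + 1) * (a M - hermCoeff f M) ^ 2 =
      ((M + 2 : ℕ) : ℝ) * hermCoeff f (M + 2) ^ 2 := by
  have hb := h.2.2
  rw [bCoeff, Nat.add_sub_cancel] at hb
  have hsqrt : √(((M : ℝ) + 1) / 2) * (a M - hermCoeff f M) =
      √(((M : ℝ) + 2) / 2) * -hermCoeff f (M + 2) := by
    push_cast at hb; ring_nf at hb ⊢; linarith
  have hsq := mul_sq_eq_of_sqrt_mul_eq (by positivity) (by positivity) hsqrt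
  push_cast at hsq ⊢
  linarith

theorem weighted_error_sq_le (h : IsGalerkinCoeffs f M a) (hM : 1 ≤ M) {m : ℕ} (hm : m ≤ M) :
    ((m : ℝ) + 1) * (a m - hermCoeff f m) ^ 2 ≤
      ((M + 1 : ℕ) : ℝ) * hermCoeff f (M + 1) ^ 2 +
        ((M + 2 : ℕ) : ℝ) * hermCoeff f (M + 2) ^ 2 := by
  have hpos : ∀ n : ℕ, 0 ≤ (n : ℝ) * hermCoeff f n ^ 2 := fun n => by positivity
  refine forall_le_of_le_add_two (w := fun m => ((m : ℝ) + 1) * (a m - hermCoeff f m) ^ 2)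
    (fun m hm => h.weighted_error_sq_le_add_two hm) ?_ ?_ m hm
  · rw [h.weighted_error_sq_last]; linarith [hpos (M + 1)]
  · rw [h.weighted_error_sq_pred hM]; linarith [hpos (M + 2)]

theorem sum_error_sq_le (h : IsGalerkinCoeffs f M a) (hM : 1 ≤ M) :
    ∑ m ∈ Finset.range (M + 1), (a m - hermCoeff f m) ^ 2 ≤
      (((M + 1 : ℕ) : ℝ) * hermCoeff f (M + 1) ^ 2 +
        ((M + 2 : ℕ) : ℝ) * hermCoeff f (M + 2) ^ 2) * (1 + log ((M : ℝ) + 1)) := by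
  set K := ((M + 1 : ℕ) : ℝ) * hermCoeff f (M + 1) ^ 2 +
    ((M + 2 : ℕ) : ℝ) * hermCoeff f (M + 2) ^ 2
  calc ∑ m ∈ Finset.range (M + 1), (a m - hermCoeff f m) ^ 2
      ≤ ∑ m ∈ Finset.range (M + 1), K * ((m : ℝ) + 1)⁻¹ := by
        refine Finset.sum_le_sum fun m hm => ?_
        rw [← div_eq_mul_inv, le_div_iff₀ (by positivity), mul_comm]
        exact h.weighted_error_sq_le hM (Finset.mem_range_succ_iff.mp hm)
    _ = K * ∑ m ∈ Finset.range (M + 1), ((m : ℝ) + 1)⁻¹ := by rw [Finset.mul_sum]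
    _ ≤ K * (1 + log ((M : ℝ) + 1)) := by
        gcongr; exact_mod_cast sum_range_inv_succ_le_one_add_log (M + 1)

end IsGalerkinCoeffs

/-- the ℓ²-error of the Galerkin coefficients is bounded by
C M^{-s+1} log M ‖f‖_s². -/
theorem galerkin_coeff_error (s : ℝ) (hs : 2 ≤ s) :
    ∃ C > 0, ∀ M : ℕ, 2 ≤ M → ∀ f : ℝ → ℝ, MemLp f 2 (volume : Measure ℝ) →
      Summable (fun m : ℕ => ((m : ℝ) + 1) ^ s * hermCoeff f m ^ 2) →
      ∀ a : ℕ → ℝ, IsGalerkinCoeffs f M a →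
        (∑ m ∈ Finset.range (M + 1), (a m - hermCoeff f m) ^ 2) ≤
          C * (M : ℝ) ^ (-s + 1) * Real.log M * sobolevSq f s := by
  refine ⟨8, by norm_num, fun M hM f _ hc a h => ?_⟩
  have hM' : (2 : ℝ) ≤ M := by exact_mod_cast hM
  have hS : 0 ≤ sobolevSq f s := tsum_nonneg fun _ => by positivity
  have hlog : 0 ≤ 1 + log ((M : ℝ) + 1) := by
    linarith [log_nonneg (by linarith : (1 : ℝ) ≤ M + 1)]
  have htail (n : ℕ) (hn : M ≤ n) :
      (n : ℝ) * hermCoeff f n ^ 2 ≤ (M : ℝ) ^ (-s + 1) * sobolevSq f s :=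
    natCast_mul_sq_le_rpow_mul_tsum (by linarith) (by linarith) hc
      (by have : (M : ℝ) ≤ n := by exact_mod_cast hn
          linarith)
  calc ∑ m ∈ Finset.range (M + 1), (a m - hermCoeff f m) ^ 2
      ≤ (((M + 1 : ℕ) : ℝ) * hermCoeff f (M + 1) ^ 2 +
          ((M + 2 : ℕ) : ℝ) * hermCoeff f (M + 2) ^ 2) * (1 + log ((M : ℝ) + 1)) :=
        h.sum_error_sq_le (by omega)
    _ ≤ (2 * (M : ℝ) ^ (-s + 1) * sobolevSq f s) * (4 * log M) := by
        gcongr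
        · linarith [htail (M + 1) (by omega), htail (M + 2) (by omega)]
        · exact one_add_log_succ_le_four_mul_log hM'
    _ = 8 * (M : ℝ) ^ (-s + 1) * log M * sobolevSq f s := by ring
end

section
/- Let f ∈ L²(ℝ) and let M ≥ 2 be an integer. If a_0, …, a_M are Galerkin coefficients of order M for f, then |f̂_M − a_M| = √((M+2)/(M+1)) · |f̂_{M+2}| and |f̂_{M−1} − a_{M−1}| = √((M+1)/M) · |f̂_{M+1}|. -/
open MeasureTheory Real

/-!
Only the last two Galerkin equations matter: comparing them with the definition of `b_{M+1}` and
`b_M` gives `√((M+1)/2) (f̂_M - a_M) = √((M+2)/2) f̂_{M+2}` and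
`√(M/2) (f̂_{M-1} - a_{M-1}) = √((M+1)/2) f̂_{M+1}`, and the left-hand factors are positive.
-/

theorem abs_eq_sqrt_div_mul_abs_of_sqrt_mul_eq {c d x y : ℝ} (hc : 0 < c)
    (h : √c * x = √d * y) : |x| = √(d / c) * |y| := by
  have hc' : 0 < √c := Real.sqrt_pos.2 hc
  rw [Real.sqrt_div' d hc.le, div_mul_eq_mul_div, eq_div_iff hc'.ne']
  calc |x| * √c = |√c * x| := by rw [abs_mul, abs_of_pos hc', mul_comm]
    _ = |√d * y| := by rw [h]
    _ = √d * |y| := by rw [abs_mul, abs_of_nonneg (Real.sqrt_nonneg d)]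

namespace IsGalerkinCoeffs

variable {f : ℝ → ℝ} {M : ℕ} {a : ℕ → ℝ}

theorem sqrt_mul_sub_top (ha : IsGalerkinCoeffs f M a) :
    √(((M : ℝ) + 1) / 2) * (hermCoeff f M - a M) =
      √(((M : ℝ) + 2) / 2) * hermCoeff f (M + 2) := by
  have h := ha.2.2
  simp only [bCoeff, Nat.add_sub_cancel, Nat.cast_add, Nat.cast_one, add_assoc,
    one_add_one_eq_two] at h
  linarith

theorem sqrt_mul_sub_pred (ha : IsGalerkinCoeffs f M a) :
    √((M : ℝ) / 2) * (hermCoeff f (M - 1) - a (M - 1)) =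
      √(((M : ℝ) + 1) / 2) * hermCoeff f (M + 1) := by
  have h := ha.2.1
  simp only [bCoeff] at h
  linarith

end IsGalerkinCoeffs

theorem galerkin_top_coeff_error_general (f : ℝ → ℝ)
    (M : ℕ) (hM : 2 ≤ M) (a : ℕ → ℝ) (ha : IsGalerkinCoeffs f M a) :
    |hermCoeff f M - a M| =
        Real.sqrt (((M : ℝ) + 2) / ((M : ℝ) + 1)) * |hermCoeff f (M + 2)| ∧
      |hermCoeff f (M - 1) - a (M - 1)| =
        Real.sqrt (((M : ℝ) + 1) / (M : ℝ)) * |hermCoeff f (M + 1)| := by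
  have hM₀ : (0 : ℝ) < M := by exact_mod_cast (by omega : 0 < M)
  constructor
  · have h := abs_eq_sqrt_div_mul_abs_of_sqrt_mul_eq (by positivity) ha.sqrt_mul_sub_top
    rwa [div_div_div_cancel_right₀ two_ne_zero] at h
  · have h := abs_eq_sqrt_div_mul_abs_of_sqrt_mul_eq (by positivity) ha.sqrt_mul_sub_pred
    rwa [div_div_div_cancel_right₀ two_ne_zero] at h

/-- the two top Galerkin coefficient errors. -/
theorem galerkin_top_coeff_error (f : ℝ → ℝ) (hf : MemLp f 2 (volume : Measure ℝ))
    (M : ℕ) (hM : 2 ≤ M) (a : ℕ → ℝ) (ha : IsGalerkinCoeffs f M a) :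
    |hermCoeff f M - a M| =
        Real.sqrt (((M : ℝ) + 2) / ((M : ℝ) + 1)) * |hermCoeff f (M + 2)| ∧
      |hermCoeff f (M - 1) - a (M - 1)| =
        Real.sqrt (((M : ℝ) + 1) / (M : ℝ)) * |hermCoeff f (M + 1)| :=
  galerkin_top_coeff_error_general f M hM a ha
end

section
/- Let p be a continuous probability density on ℝ and let h : ℝ → ℝ be continuous with h·p integrable. Set ĥ = ∫_ℝ h(y) p(y) dy and f(x) = −∫_{−∞}^x (h(y) − ĥ) p(y) dy. Then f is continuously differentiable on ℝ with f′(x) = −(h(x) − ĥ) p(x) for every x, and f(x) → 0 both as x → −∞ and as x → +∞. -/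
/-!
With `g = (h - ĥ) p`, the function is `x ↦ -∫_{(-∞, x]} g`. For integrable continuous `g` the
fundamental theorem of calculus gives the derivative `-g`, and exhausting `ℝ` by half-lines
shows that `∫_{(-∞, x]} g` tends to `0` as `x → -∞` and to `∫ g` as `x → +∞`. Finally
`∫ g = ĥ - ĥ ∫ p = 0` because `p` has total mass one.
-/

open MeasureTheory Filter Set Topology

section IntegralIic

variable {E : Type*} [NormedAddCommGroup E] [NormedSpace ℝ E] {g : ℝ → E}

theorem hasDerivAt_integral_Iic [CompleteSpace E] (hg : Integrable g) {x : ℝ}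
    (hx : ContinuousAt g x) :
    HasDerivAt (fun u => ∫ y in Iic u, g y) (g x) x := by
  have split : ∀ u : ℝ, ∫ y in Iic u, g y = (∫ y in Iic 0, g y) + ∫ y in 0..u, g y := by
    intro u
    rw [← intervalIntegral.integral_Iic_sub_Iic hg.integrableOn hg.integrableOn, add_sub_cancel]
  exact ((intervalIntegral.integral_hasDerivAt_right hg.intervalIntegrable
    hg.aestronglyMeasurable.stronglyMeasurableAtFilter hx).const_add _).congr_of_eventuallyEq
    (.of_forall split)

theorem contDiff_one_integral_Iic [CompleteSpace E] (hg : Integrable g) (hc : Continuous g) :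
    ContDiff ℝ 1 (fun u => ∫ y in Iic u, g y) := by
  have hderiv : ∀ x, HasDerivAt (fun u => ∫ y in Iic u, g y) (g x) x :=
    fun x => hasDerivAt_integral_Iic hg hc.continuousAt
  have deriv_eq : deriv (fun u => ∫ y in Iic u, g y) = g := funext fun x => (hderiv x).deriv
  exact contDiff_one_iff_deriv.2 ⟨fun x => (hderiv x).differentiableAt, deriv_eq.symm ▸ hc⟩

theorem tendsto_integral_Iic_atTop (hg : Integrable g) :
    Tendsto (fun u => ∫ y in Iic u, g y) atTop (𝓝 (∫ y, g y)) :=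
  (aecover_Iic tendsto_id).integral_tendsto_of_countably_generated hg

end IntegralIic

theorem integrable_sub_const_mul {p h : ℝ → ℝ} (hp_int : Integrable p)
    (hhp : Integrable (fun x => h x * p x)) (c : ℝ) :
    Integrable (fun y => (h y - c) * p y) :=
  (hhp.sub (hp_int.const_mul c)).congr (.of_forall fun _ => (sub_mul ..).symm)

theorem integral_sub_integral_mul_mul_eq_zero {p h : ℝ → ℝ} (hp_int : Integrable p)
    (hp_one : ∫ x, p x = 1) (hhp : Integrable (fun x => h x * p x)) :
    ∫ y, (h y - ∫ z, h z * p z) * p y = 0 := by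
  simp only [sub_mul]
  rw [integral_sub hhp (hp_int.const_mul _), integral_const_mul, hp_one, mul_one, sub_self]

theorem gain_antiderivative_C1_and_boundary_general
    (p h : ℝ → ℝ)
    (hp_cont : Continuous p)
    (hp_int : Integrable p) (hp_one : (∫ x : ℝ, p x) = 1)
    (hh_cont : Continuous h)
    (hhp : Integrable (fun x => h x * p x)) :
    ContDiff ℝ 1 (fun x => -∫ y in Set.Iic x, (h y - ∫ z : ℝ, h z * p z) * p y) ∧
      (∀ x : ℝ, deriv (fun x => -∫ y in Set.Iic x, (h y - ∫ z : ℝ, h z * p z) * p y) x =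
        -((h x - ∫ z : ℝ, h z * p z) * p x)) ∧
      Tendsto (fun x => -∫ y in Set.Iic x, (h y - ∫ z : ℝ, h z * p z) * p y)
        atBot (nhds 0) ∧
      Tendsto (fun x => -∫ y in Set.Iic x, (h y - ∫ z : ℝ, h z * p z) * p y)
        atTop (nhds 0) := by
  have hg_cont : Continuous fun y => (h y - ∫ z, h z * p z) * p y :=
    (hh_cont.sub continuous_const).mul hp_cont
  have hg_int := integrable_sub_const_mul hp_int hhp (∫ z, h z * p z)
  have hg_zero := integral_sub_integral_mul_mul_eq_zero hp_int hp_one hhp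
  refine ⟨(contDiff_one_integral_Iic hg_int hg_cont).neg,
    fun x => (hasDerivAt_integral_Iic hg_int hg_cont.continuousAt).neg.deriv, ?_, ?_⟩
  · rw [← neg_zero]
    exact (tendsto_integral_Iic_zero tendsto_id).neg
  · rw [← neg_zero, ← hg_zero]
    exact (tendsto_integral_Iic_atTop hg_int).neg

/-- f(x) = -∫_{-∞}^x (h - ĥ) p is C¹ with f' = -(h - ĥ)p and
vanishes at ±∞ (the zero-boundary solvability of the FPF gain BVP in 1D). -/
theorem gain_antiderivative_C1_and_boundary
    (p h : ℝ → ℝ)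
    (hp_cont : Continuous p) (hp_nonneg : ∀ x, 0 ≤ p x)
    (hp_int : Integrable p) (hp_one : (∫ x : ℝ, p x) = 1)
    (hh_cont : Continuous h)
    (hhp : Integrable (fun x => h x * p x)) :
    ContDiff ℝ 1 (fun x => -∫ y in Set.Iic x, (h y - ∫ z : ℝ, h z * p z) * p y) ∧
      (∀ x : ℝ, deriv (fun x => -∫ y in Set.Iic x, (h y - ∫ z : ℝ, h z * p z) * p y) x =
        -((h x - ∫ z : ℝ, h z * p z) * p x)) ∧
      Tendsto (fun x => -∫ y in Set.Iic x, (h y - ∫ z : ℝ, h z * p z) * p y)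
        atBot (nhds 0) ∧
      Tendsto (fun x => -∫ y in Set.Iic x, (h y - ∫ z : ℝ, h z * p z) * p y)
        atTop (nhds 0) :=
  gain_antiderivative_C1_and_boundary_general p h hp_cont hp_int hp_one hh_cont hhp
end

section
/- For all m, n ∈ ℕ, the generalized Hermite functions are orthonormal in L²(ℝ): ∫_ℝ H̃_m(x) H̃_n(x) dx = 1 if m = n and 0 otherwise. -/
open MeasureTheory Real

/-!
Since `exp (-x ^ 2 / 2) ^ 2 = exp (-x ^ 2)`, the claim is that the `H n` are orthogonal for
`⟪p, q⟫ = ∫ p q exp (-x ^ 2)` with `⟪H n, H n⟫ = 2 ^ n * n ! * √π`. Integration by parts makes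
`2x - d/dx` adjoint to `d/dx`; the former maps `H n` to `H (n + 1)` and the latter maps
`H (n + 1)` to `2 (n + 1) H n` and kills `H 0`. Hence
`⟪H (m + 1), H (n + 1)⟫ = 2 (n + 1) ⟪H m, H n⟫` and `⟪H (m + 1), H 0⟫ = 0`, and induction on `m`
finishes.
-/

open Polynomial

noncomputable def physHermitePoly : ℕ → ℝ[X]
  | 0 => 1
  | 1 => 2 * X
  | n + 2 => 2 * X * physHermitePoly (n + 1) - ((2 * (n + 1) : ℕ) : ℝ[X]) * physHermitePoly n

lemma physHermite_eq_eval (n : ℕ) (x : ℝ) : physHermite n x = (physHermitePoly n).eval x := by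
  induction n using Nat.twoStepInduction with
  | zero => simp [physHermite, physHermitePoly]
  | one => simp [physHermite, physHermitePoly]
  | more n ih₀ ih₁ => simp [physHermite, physHermitePoly, ih₀, ih₁]

lemma derivative_physHermitePoly_succ (n : ℕ) :
    derivative (physHermitePoly (n + 1)) = ((2 * (n + 1) : ℕ) : ℝ[X]) * physHermitePoly n := by
  induction n using Nat.twoStepInduction with
  | zero => simp [physHermitePoly]
  | one =>
    push_cast [physHermitePoly]
    simp only [derivative_sub, derivative_mul, derivative_ofNat, derivative_one, derivative_X]
    ring
  | more n ih₀ ih₁ =>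
    rw [physHermitePoly, derivative_sub, derivative_mul, derivative_mul, ih₁, derivative_mul, ih₀]
    simp only [physHermitePoly, derivative_ofNat, derivative_natCast, derivative_X]
    push_cast
    ring

lemma physHermitePoly_succ (n : ℕ) :
    physHermitePoly (n + 1) = 2 * X * physHermitePoly n - derivative (physHermitePoly n) := by
  cases n with
  | zero => simp [physHermitePoly]
  | succ n => rw [derivative_physHermitePoly_succ, physHermitePoly]

lemma integrable_eval_mul_exp_neg_mul_sq {b : ℝ} (hb : 0 < b) (p : ℝ[X]) :
    Integrable fun x : ℝ => p.eval x * exp (-b * x ^ 2) := by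
  induction p using Polynomial.induction_on' with
  | add p q hp hq => exact (hp.add hq).congr (.of_forall fun x => by simp [add_mul])
  | monomial n a =>
    have h :=
      integrable_rpow_mul_exp_neg_mul_sq hb (s := n) (neg_one_lt_zero.trans_le n.cast_nonneg)
    simp_rw [rpow_natCast] at h
    simpa [mul_assoc] using h.const_mul a

noncomputable def gaussianPairing (p q : ℝ[X]) : ℝ :=
  ∫ x : ℝ, p.eval x * q.eval x * exp (-x ^ 2)

lemma integrable_eval_mul_eval_mul_exp_neg_sq (p q : ℝ[X]) :
    Integrable fun x : ℝ => p.eval x * q.eval x * exp (-x ^ 2) := by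
  simpa using integrable_eval_mul_exp_neg_mul_sq one_pos (p * q)

lemma gaussianPairing_comm (p q : ℝ[X]) : gaussianPairing p q = gaussianPairing q p := by
  simp only [gaussianPairing, mul_comm (p.eval _)]

lemma gaussianPairing_one_one : gaussianPairing 1 1 = √π := by
  simpa [gaussianPairing] using integral_gaussian 1

lemma gaussianPairing_zero_right (p : ℝ[X]) : gaussianPairing p 0 = 0 := by
  simp [gaussianPairing]

lemma gaussianPairing_natCast_mul_right (p q : ℝ[X]) (k : ℕ) :
    gaussianPairing p (k * q) = k * gaussianPairing p q := by
  rw [gaussianPairing, gaussianPairing, ← integral_const_mul]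
  congr 1 with x
  simp only [eval_mul, eval_natCast]
  ring

lemma gaussianPairing_derivative_left (p q : ℝ[X]) :
    gaussianPairing (derivative p) q = gaussianPairing p (2 * X * q - derivative q) := by
  have hv : ∀ x : ℝ, HasDerivAt (fun y => q.eval y * exp (-y ^ 2))
      (-((2 * X * q - derivative q).eval x * exp (-x ^ 2))) x := by
    intro x
    have hg : HasDerivAt (fun y : ℝ => exp (-y ^ 2)) (exp (-x ^ 2) * -(2 * x)) x := by
      simpa using ((hasDerivAt_pow 2 x).neg).exp
    refine ((q.hasDerivAt x).mul hg).congr_deriv ?_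
    simp only [eval_sub, eval_mul, eval_ofNat, eval_X]
    ring
  have hibp := integral_mul_deriv_eq_deriv_mul_of_integrable (fun x _ => p.hasDerivAt x)
    (fun x _ => hv x)
    ((integrable_eval_mul_eval_mul_exp_neg_sq p (2 * X * q - derivative q)).neg.congr
      (.of_forall fun x => by simp only [Pi.mul_apply, Pi.neg_apply]; ring))
    ((integrable_eval_mul_eval_mul_exp_neg_sq (derivative p) q).congr
      (.of_forall fun x => by simp only [Pi.mul_apply]; ring))
    ((integrable_eval_mul_eval_mul_exp_neg_sq p q).congr
      (.of_forall fun x => by simp only [Pi.mul_apply]; ring))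
  simp only [mul_neg, integral_neg, neg_inj] at hibp
  simpa [gaussianPairing, mul_assoc] using hibp.symm

lemma gaussianPairing_physHermitePoly_succ_left (n : ℕ) (q : ℝ[X]) :
    gaussianPairing (physHermitePoly (n + 1)) q =
      gaussianPairing (physHermitePoly n) (derivative q) := by
  rw [physHermitePoly_succ, gaussianPairing_comm, ← gaussianPairing_derivative_left,
    gaussianPairing_comm]

lemma gaussianPairing_physHermitePoly (m n : ℕ) :
    gaussianPairing (physHermitePoly m) (physHermitePoly n) =
      if m = n then 2 ^ n * n.factorial * √π else 0 := by
  induction m generalizing n with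
  | zero =>
    cases n with
    | zero => simpa [physHermitePoly] using gaussianPairing_one_one
    | succ n =>
      rw [gaussianPairing_comm, gaussianPairing_physHermitePoly_succ_left]
      simp [physHermitePoly, gaussianPairing_zero_right]
  | succ m ih =>
    cases n with
    | zero =>
      rw [gaussianPairing_physHermitePoly_succ_left]
      simp [physHermitePoly, gaussianPairing_zero_right]
    | succ n =>
      rw [gaussianPairing_physHermitePoly_succ_left, derivative_physHermitePoly_succ,
        gaussianPairing_natCast_mul_right, ih]
      simp only [add_left_inj]
      split_ifs with h
      · push_cast [h, Nat.factorial_succ, pow_succ]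
        ring
      · rw [mul_zero]

open MeasureTheory in
/-- the generalized Hermite functions are orthonormal in L²(ℝ). -/
theorem tildeH_orthonormal (m n : ℕ) :
    (∫ x : ℝ, tildeH m x * tildeH n x) = if m = n then 1 else 0 := by
  set c : ℕ → ℝ := fun k => π ^ (-(1 / 4) : ℝ) * (√(2 ^ k * k.factorial))⁻¹
  have hprod : ∀ x, tildeH m x * tildeH n x =
      c m * c n * ((physHermitePoly m).eval x * (physHermitePoly n).eval x * exp (-x ^ 2)) := by
    intro x
    have hexp : exp (-x ^ 2) = exp (-x ^ 2 / 2) * exp (-x ^ 2 / 2) := by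
      rw [← exp_add]; ring_nf
    simp only [tildeH, physHermite_eq_eval, c, hexp]
    ring
  simp_rw [hprod]
  rw [integral_const_mul, ← gaussianPairing, gaussianPairing_physHermitePoly]
  split_ifs with h
  · subst h
    have hsqrt : √(2 ^ m * m.factorial : ℝ) ^ 2 = 2 ^ m * m.factorial := sq_sqrt (by positivity)
    have hpi : π ^ (-(1 / 4) : ℝ) * π ^ (-(1 / 4) : ℝ) * √π = 1 := by
      rw [← rpow_add pi_pos, sqrt_eq_rpow, ← rpow_add pi_pos]
      norm_num
    have hF : (0 : ℝ) < 2 ^ m * m.factorial := by positivity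
    calc c m * c m * (2 ^ m * m.factorial * √π)
        = (π ^ (-(1 / 4) : ℝ) * π ^ (-(1 / 4) : ℝ) * √π) *
            ((√(2 ^ m * m.factorial : ℝ) ^ 2)⁻¹ * (2 ^ m * m.factorial)) := by
          simp only [c]; ring
      _ = 1 := by rw [hpi, hsqrt, inv_mul_cancel₀ hF.ne', one_mul]
  · simp
end
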